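/- arXiv:2011.06223 — 5 statements merged into one kernel-verified Lean document; each statement's English description precedes it below -/
import Mathlib

section
/- Under the delay model, for every real t, the cumulative distribution function of the total per-epoch delay T satisfies ℙ(T ≤ t) = Σ_{ν=2}^{∞} (ν−1)(1−p)² p^{ν−2} · max(0, 1 − exp(−(αμ/ℓ̃)(t − ℓ̃/μ − τν))); equivalently, the expected return E[ℓ̃ · 1_{T ≤ t}] = Σ_{ν=2}^{∞} (ν−1)(1−p)² p^{ν−2} · max(0, f_ν(t; ℓ̃)), where f_ν(t; ℓ) = ℓ(1 − exp(−(αμ/ℓ)(t − ℓ/μ − τν))). -/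
/-!
Conditioning on `(N₁, N₂) = (a, b)`, independence factors `ℙ(T ≤ t, N₁ = a, N₂ = b)` into the
exponential CDF of `T₂` at `t - ℓ̃/μ - τ(a + b)` times the two geometric masses. Grouping the pairs
by `ν = a + b`, the geometric masses convolve to `(ν - 1)(1 - p)² p^(ν - 2)`, the law of `N₁ + N₂`.
The expected return is `ℓ̃ ℙ(T ≤ t)`, and `ℓ̃ > 0` moves inside the `max`.
-/

open MeasureTheory ProbabilityTheory Real Finset Function
open scoped ENNReal

noncomputable def shiftedGeometricPMFReal (p : ℝ) (x : ℕ) : ℝ :=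
  if 1 ≤ x then p ^ (x - 1) * (1 - p) else 0

@[simp]
lemma shiftedGeometricPMFReal_zero (p : ℝ) : shiftedGeometricPMFReal p 0 = 0 := rfl

@[simp]
lemma shiftedGeometricPMFReal_succ (p : ℝ) (k : ℕ) :
    shiftedGeometricPMFReal p (k + 1) = p ^ k * (1 - p) := by
  simp [shiftedGeometricPMFReal]

theorem sum_antidiagonal_shiftedGeometricPMFReal (p : ℝ) (ν : ℕ) :
    ∑ ab ∈ antidiagonal ν, shiftedGeometricPMFReal p ab.1 * shiftedGeometricPMFReal p ab.2 =
      if 2 ≤ ν then ((ν : ℝ) - 1) * (1 - p) ^ 2 * p ^ (ν - 2) else 0 := by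
  match ν with
  | 0 => simp
  | 1 => simp [Nat.sum_antidiagonal_succ]
  | n + 2 =>
    have hterm : ∀ ab ∈ antidiagonal n,
        p ^ ab.1 * (1 - p) * (p ^ ab.2 * (1 - p)) = (1 - p) ^ 2 * p ^ n := by
      intro ab hab
      rw [← mem_antidiagonal.mp hab, pow_add]
      ring
    rw [Nat.sum_antidiagonal_succ, Nat.sum_antidiagonal_succ']
    simp only [shiftedGeometricPMFReal_zero, shiftedGeometricPMFReal_succ, zero_mul, mul_zero,
      zero_add, sum_congr rfl hterm, sum_const, Nat.card_antidiagonal, nsmul_eq_mul]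
    simp only [le_add_iff_nonneg_left, zero_le, if_true, Nat.add_sub_cancel]
    push_cast
    ring

theorem ENNReal.tsum_prod_eq_tsum_sum_antidiagonal {A : Type*} [AddMonoid A] [HasAntidiagonal A]
    (f : A × A → ℝ≥0∞) : ∑' q, f q = ∑' n, ∑ ab ∈ antidiagonal n, f ab := by
  rw [← HasAntidiagonal.sigmaAntidiagonalEquivProd.tsum_eq, ENNReal.tsum_sigma']
  simp [tsum_fintype, Finset.sum_attach]

lemma ite_one_sub_exp_neg_mul_eq_max {γ : ℝ} (hγ : 0 ≤ γ) (s : ℝ) :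
    (if 0 ≤ s then 1 - exp (-γ * s) else 0) = max 0 (1 - exp (-γ * s)) := by
  split_ifs with hs
  · rw [max_eq_right]
    simp only [sub_nonneg, exp_le_one_iff]
    nlinarith
  · rw [max_eq_left]
    simp only [sub_nonpos, one_le_exp_iff]
    nlinarith

section

variable {Ω : Type*} [MeasurableSpace Ω] {P : Measure Ω} {X : Ω → ℝ} {N₁ N₂ : Ω → ℕ}

theorem ProbabilityTheory.iIndepFun.measure_le_and_eq_and_eq
    (h : iIndepFun (m := fun _ => Real.measurableSpace)
      ![X, fun ω => (N₁ ω : ℝ), fun ω => (N₂ ω : ℝ)] P) (s : ℝ) (a b : ℕ) :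
    P {ω | X ω ≤ s ∧ N₁ ω = a ∧ N₂ ω = b} =
      P {ω | X ω ≤ s} * (P {ω | N₁ ω = a} * P {ω | N₂ ω = b}) := by
  have hevent : {ω | X ω ≤ s ∧ N₁ ω = a ∧ N₂ ω = b} =
      ⋂ i ∈ univ, ![X, fun ω => (N₁ ω : ℝ), fun ω => (N₂ ω : ℝ)] i ⁻¹'
        ![Set.Iic s, {(a : ℝ)}, {(b : ℝ)}] i := by
    ext ω
    simp [Fin.forall_fin_succ]
  rw [hevent, h.measure_inter_preimage_eq_mul univ (by simp [Fin.forall_fin_succ]),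
    Fin.prod_univ_three, mul_assoc]
  simp [Set.preimage]

theorem measure_le_comp_add_eq_tsum (hX : Measurable X) (hN₁ : Measurable N₁)
    (hN₂ : Measurable N₂)
    (h : iIndepFun (m := fun _ => Real.measurableSpace)
      ![X, fun ω => (N₁ ω : ℝ), fun ω => (N₂ ω : ℝ)] P) (g : ℕ → ℝ) :
    P {ω | X ω ≤ g (N₁ ω + N₂ ω)} = ∑' ν, P {ω | X ω ≤ g ν} *
      ∑ ab ∈ antidiagonal ν, P {ω | N₁ ω = ab.1} * P {ω | N₂ ω = ab.2} := by
  have hunion : {ω | X ω ≤ g (N₁ ω + N₂ ω)} =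
      ⋃ q : ℕ × ℕ, {ω | X ω ≤ g (q.1 + q.2) ∧ N₁ ω = q.1 ∧ N₂ ω = q.2} := by
    ext ω
    simp
  have hdisj : Pairwise (Disjoint on
      fun q : ℕ × ℕ => {ω | X ω ≤ g (q.1 + q.2) ∧ N₁ ω = q.1 ∧ N₂ ω = q.2}) := by
    intro q r hqr
    refine Set.disjoint_left.mpr fun ω ⟨_, h₁, h₂⟩ ⟨_, h₁', h₂'⟩ => hqr ?_
    exact Prod.ext (h₁.symm.trans h₁') (h₂.symm.trans h₂')
  have hmeas (q : ℕ × ℕ) :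
      MeasurableSet {ω | X ω ≤ g (q.1 + q.2) ∧ N₁ ω = q.1 ∧ N₂ ω = q.2} :=
    (hX measurableSet_Iic).inter
      ((hN₁ (measurableSet_singleton _)).inter (hN₂ (measurableSet_singleton _)))
  rw [hunion, measure_iUnion hdisj hmeas, ENNReal.tsum_prod_eq_tsum_sum_antidiagonal]
  refine tsum_congr fun ν => ?_
  rw [mul_sum]
  refine sum_congr rfl fun ab hab => ?_
  rw [← mem_antidiagonal.mp hab, h.measure_le_and_eq_and_eq]

theorem measureReal_le_comp_add_eq_tsum [IsFiniteMeasure P] (hX : Measurable X)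
    (hN₁ : Measurable N₁) (hN₂ : Measurable N₂)
    (h : iIndepFun (m := fun _ => Real.measurableSpace)
      ![X, fun ω => (N₁ ω : ℝ), fun ω => (N₂ ω : ℝ)] P) (g : ℕ → ℝ) :
    P.real {ω | X ω ≤ g (N₁ ω + N₂ ω)} = ∑' ν, P.real {ω | X ω ≤ g ν} *
      ∑ ab ∈ antidiagonal ν, P.real {ω | N₁ ω = ab.1} * P.real {ω | N₂ ω = ab.2} := by
  have hfin (ab : ℕ × ℕ) : P {ω | N₁ ω = ab.1} * P {ω | N₂ ω = ab.2} ≠ ∞ :=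
    ENNReal.mul_ne_top (measure_ne_top _ _) (measure_ne_top _ _)
  rw [measureReal_def, measure_le_comp_add_eq_tsum hX hN₁ hN₂ h,
    ENNReal.tsum_toReal_eq fun ν =>
      ENNReal.mul_ne_top (measure_ne_top _ _) (ENNReal.sum_ne_top.mpr fun ab _ => hfin ab)]
  refine tsum_congr fun ν => ?_
  rw [ENNReal.toReal_mul, ENNReal.toReal_sum fun ab _ => hfin ab]
  simp only [ENNReal.toReal_mul, measureReal_def]

end

theorem delay_cdf_and_expected_return_general
    {Ω : Type*} [MeasureSpace Ω] [IsProbabilityMeasure (ℙ : Measure Ω)]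
    (μ α τ p ℓt : ℝ) (hμ : 0 < μ) (hα : 0 < α) (hℓ : 0 < ℓt)
    (T₂ : Ω → ℝ) (N₁ N₂ : Ω → ℕ)
    (hT₂meas : Measurable T₂) (hN₁meas : Measurable N₁) (hN₂meas : Measurable N₂)
    (hT₂cdf : ∀ s : ℝ, (ℙ {ω | T₂ ω ≤ s}).toReal =
      if 0 ≤ s then 1 - Real.exp (-(α * μ / ℓt) * s) else 0)
    (hN₁pmf : ∀ x : ℕ,
      (ℙ {ω | N₁ ω = x}).toReal = if 1 ≤ x then p ^ (x - 1) * (1 - p) else 0)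
    (hN₂pmf : ∀ x : ℕ,
      (ℙ {ω | N₂ ω = x}).toReal = if 1 ≤ x then p ^ (x - 1) * (1 - p) else 0)
    (hindep : iIndepFun (m := fun _ => Real.measurableSpace)
      ![T₂, fun ω => (N₁ ω : ℝ), fun ω => (N₂ ω : ℝ)] ℙ)
    (T : Ω → ℝ) (hT : ∀ ω, T ω = ℓt / μ + T₂ ω + τ * ((N₁ ω : ℝ) + (N₂ ω : ℝ))) :
    ∀ t : ℝ,
      (ℙ {ω | T ω ≤ t}).toReal =
        ∑' ν : ℕ, (if 2 ≤ ν then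
          ((ν : ℝ) - 1) * (1 - p) ^ 2 * p ^ (ν - 2) *
            max 0 (1 - Real.exp (-(α * μ / ℓt) * (t - ℓt / μ - τ * ν)))
          else 0) ∧
      ∫ ω, Set.indicator {ω' | T ω' ≤ t} (fun _ => ℓt) ω ∂ℙ =
        ∑' ν : ℕ, (if 2 ≤ ν then
          ((ν : ℝ) - 1) * (1 - p) ^ 2 * p ^ (ν - 2) *
            max 0 (ℓt * (1 - Real.exp (-(α * μ / ℓt) * (t - ℓt / μ - τ * ν))))
          else 0) := by
  intro t
  have hevent : {ω | T ω ≤ t} = {ω | T₂ ω ≤ t - ℓt / μ - τ * ((N₁ ω + N₂ ω : ℕ) : ℝ)} := by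
    ext ω
    simp only [Set.mem_ofPred_eq, hT, Nat.cast_add]
    constructor <;> intro h <;> linarith
  have hcdf : (ℙ : Measure Ω).real {ω | T ω ≤ t} = ∑' ν : ℕ, (if 2 ≤ ν then
      ((ν : ℝ) - 1) * (1 - p) ^ 2 * p ^ (ν - 2) *
        max 0 (1 - Real.exp (-(α * μ / ℓt) * (t - ℓt / μ - τ * ν))) else 0) := by
    rw [hevent, measureReal_le_comp_add_eq_tsum hT₂meas hN₁meas hN₂meas hindep
      (fun ν => t - ℓt / μ - τ * ν)]
    refine tsum_congr fun ν => ?_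
    simp only [measureReal_def, hT₂cdf, hN₁pmf, hN₂pmf, ← shiftedGeometricPMFReal.eq_1,
      sum_antidiagonal_shiftedGeometricPMFReal,
      ite_one_sub_exp_neg_mul_eq_max (by positivity : 0 ≤ α * μ / ℓt)]
    split_ifs <;> ring
  refine ⟨hcdf, ?_⟩
  have hmeas : MeasurableSet {ω | T ω ≤ t} := by
    rw [hevent]
    exact measurableSet_le hT₂meas (by fun_prop)
  rw [integral_indicator_const ℓt hmeas, smul_eq_mul, hcdf, ← tsum_mul_right]
  refine tsum_congr fun ν => ?_
  have hscale (x : ℝ) : max 0 (ℓt * x) = ℓt * max 0 x := by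
    rw [mul_max_of_nonneg _ _ hℓ.le, mul_zero]
  rw [hscale]
  split_ifs <;> ring

/-- Under the delay model `T = ℓ̃/μ + T₂ + τ*(N₁ + N₂)`, where `T₂` is
exponentially distributed with rate `γ = α*μ/ℓ̃`, `N₁, N₂` are i.i.d. geometric random variables
on `{1,2,...}` with `ℙ(N = x) = p^(x-1) * (1-p)`, and `T₂, N₁, N₂` are mutually independent, for
every real `t` the CDF of the total per-epoch delay satisfies
`ℙ(T ≤ t) = Σ_{ν≥2} (ν-1)*(1-p)^2*p^(ν-2) * max 0 (1 - exp (-(α*μ/ℓ̃)*(t - ℓ̃/μ - τ*ν)))`;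
equivalently, the expected return `E[ℓ̃ * 1_{T ≤ t}]` equals
`Σ_{ν≥2} (ν-1)*(1-p)^2*p^(ν-2) * max 0 (f_ν(t; ℓ̃))` with
`f_ν(t; ℓ) = ℓ * (1 - exp (-(α*μ/ℓ)*(t - ℓ/μ - τ*ν)))`. -/
theorem delay_cdf_and_expected_return
    {Ω : Type*} [MeasureSpace Ω] [IsProbabilityMeasure (ℙ : Measure Ω)]
    (μ α τ p ℓt : ℝ) (hμ : 0 < μ) (hα : 0 < α) (hτ : 0 < τ)
    (hp0 : 0 ≤ p) (hp1 : p < 1) (hℓ : 0 < ℓt)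
    (T₂ : Ω → ℝ) (N₁ N₂ : Ω → ℕ)
    (hT₂meas : Measurable T₂) (hN₁meas : Measurable N₁) (hN₂meas : Measurable N₂)
    (hT₂cdf : ∀ s : ℝ, (ℙ {ω | T₂ ω ≤ s}).toReal =
      if 0 ≤ s then 1 - Real.exp (-(α * μ / ℓt) * s) else 0)
    (hN₁pmf : ∀ x : ℕ,
      (ℙ {ω | N₁ ω = x}).toReal = if 1 ≤ x then p ^ (x - 1) * (1 - p) else 0)
    (hN₂pmf : ∀ x : ℕ,
      (ℙ {ω | N₂ ω = x}).toReal = if 1 ≤ x then p ^ (x - 1) * (1 - p) else 0)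
    (hindep : iIndepFun (m := fun _ => Real.measurableSpace)
      ![T₂, fun ω => (N₁ ω : ℝ), fun ω => (N₂ ω : ℝ)] ℙ)
    (T : Ω → ℝ) (hT : ∀ ω, T ω = ℓt / μ + T₂ ω + τ * ((N₁ ω : ℝ) + (N₂ ω : ℝ))) :
    ∀ t : ℝ,
      (ℙ {ω | T ω ≤ t}).toReal =
        ∑' ν : ℕ, (if 2 ≤ ν then
          ((ν : ℝ) - 1) * (1 - p) ^ 2 * p ^ (ν - 2) *
            max 0 (1 - Real.exp (-(α * μ / ℓt) * (t - ℓt / μ - τ * ν)))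
          else 0) ∧
      ∫ ω, Set.indicator {ω' | T ω' ≤ t} (fun _ => ℓt) ω ∂ℙ =
        ∑' ν : ℕ, (if 2 ≤ ν then
          ((ν : ℝ) - 1) * (1 - p) ^ 2 * p ^ (ν - 2) *
            max 0 (ℓt * (1 - Real.exp (-(α * μ / ℓt) * (t - ℓt / μ - τ * ν))))
          else 0) :=
  delay_cdf_and_expected_return_general μ α τ p ℓt hμ hα hℓ T₂ N₁ N₂ hT₂meas hN₁meas hN₂meas hT₂cdf
    hN₁pmf hN₂pmf hindep T hT
end

section
/- For fixed parameters α > 0, μ > 0, τ > 0, an integer ν ≥ 2 and a real t with t ≠ τν, the function ℓ ↦ f_ν(t; ℓ) = ℓ(1 − exp(−(αμ/ℓ)(t − ℓ/μ − τν))) is strictly concave on the open interval (0, ∞); moreover, for every ℓ > 0 with ℓ ≥ μ(t − τν), one has f_ν(t; ℓ) ≤ 0. -/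
/-!
With `c = α μ (t - τ ν) ≠ 0` the exponent is `α - c / ℓ`, so `f_ν(t; ℓ) = ℓ - ℓ e^{α - c/ℓ}`.
The second derivative of `ℓ ↦ ℓ e^{α - c/ℓ}` is `e^{α - c/ℓ} c² / ℓ³ > 0`, which gives strict
concavity. If `ℓ ≥ μ (t - τ ν)` the exponent is nonnegative, so `1 - exp (…) ≤ 0`.
-/

open Real Set

theorem strictConvexOn_of_hasDerivAt2_pos {D : Set ℝ} (hDo : IsOpen D) (hD : Convex ℝ D)
    {f f' f'' : ℝ → ℝ} (hf : ∀ x ∈ D, HasDerivAt f (f' x) x)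
    (hf' : ∀ x ∈ D, HasDerivAt f' (f'' x) x) (hf''_pos : ∀ x ∈ D, 0 < f'' x) :
    StrictConvexOn ℝ D f := by
  refine strictConvexOn_of_deriv2_pos hD (fun x hx => (hf x hx).continuousAt.continuousWithinAt)
    fun x hx => ?_
  rw [hDo.interior_eq] at hx
  have hderiv : deriv f =ᶠ[nhds x] f' := by
    filter_upwards [hDo.mem_nhds hx] with y hy using (hf y hy).deriv
  rw [Function.iterate_succ_apply, Function.iterate_one, hderiv.deriv_eq, (hf' x hx).deriv]
  exact hf''_pos x hx

theorem hasDerivAt_exp_sub_div (a c : ℝ) {x : ℝ} (hx : x ≠ 0) :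
    HasDerivAt (fun y => exp (a - c / y)) (exp (a - c / x) * (c / x ^ 2)) x := by
  simpa [div_eq_mul_inv, neg_div] using (((hasDerivAt_inv hx).const_mul c).const_sub a).exp

theorem hasDerivAt_mul_exp_sub_div (a c : ℝ) {x : ℝ} (hx : x ≠ 0) :
    HasDerivAt (fun y => y * exp (a - c / y)) (exp (a - c / x) * (1 + c / x)) x := by
  refine ((hasDerivAt_id' x).mul (hasDerivAt_exp_sub_div a c hx)).congr_deriv ?_
  field_simp

theorem hasDerivAt_exp_sub_div_mul_one_add_div (a c : ℝ) {x : ℝ} (hx : x ≠ 0) :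
    HasDerivAt (fun y => exp (a - c / y) * (1 + c / y)) (exp (a - c / x) * c ^ 2 / x ^ 3) x := by
  have hlin : HasDerivAt (fun y => 1 + c / y) (-(c / x ^ 2)) x := by
    simpa [div_eq_mul_inv] using ((hasDerivAt_inv hx).const_mul c).const_add 1
  refine ((hasDerivAt_exp_sub_div a c hx).mul hlin).congr_deriv ?_
  field_simp
  ring

theorem strictConvexOn_mul_exp_sub_div (a : ℝ) {c : ℝ} (hc : c ≠ 0) :
    StrictConvexOn ℝ (Ioi 0) (fun x => x * exp (a - c / x)) :=
  strictConvexOn_of_hasDerivAt2_pos isOpen_Ioi (convex_Ioi 0)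
    (fun x hx => hasDerivAt_mul_exp_sub_div a c (ne_of_gt hx))
    (fun x hx => hasDerivAt_exp_sub_div_mul_one_add_div a c (ne_of_gt hx))
    fun x hx => by have : (0 : ℝ) < x := hx; positivity

theorem strictConcaveOn_mul_one_sub_exp_sub_div (a : ℝ) {c : ℝ} (hc : c ≠ 0) :
    StrictConcaveOn ℝ (Ioi 0) (fun x => x * (1 - exp (a - c / x))) := by
  exact ((concaveOn_id (convex_Ioi 0)).sub_strictConvexOn
    (strictConvexOn_mul_exp_sub_div a hc)).congr fun x _ => by simp only [Pi.sub_apply, id]; ring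

theorem strictConcaveOn_expected_return_piece_general
    (α μ τ : ℝ) (hα : 0 < α) (hμ : 0 < μ)
    (ν : ℕ) (t : ℝ) (ht : t ≠ τ * ν) :
    StrictConcaveOn ℝ (Set.Ioi (0 : ℝ))
      (fun ℓ : ℝ => ℓ * (1 - Real.exp (-(α * μ / ℓ) * (t - ℓ / μ - τ * ν)))) ∧
    ∀ ℓ : ℝ, 0 < ℓ → μ * (t - τ * ν) ≤ ℓ →
      ℓ * (1 - Real.exp (-(α * μ / ℓ) * (t - ℓ / μ - τ * ν))) ≤ 0 := by
  have hc : α * μ * (t - τ * ν) ≠ 0 := by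
    have := sub_ne_zero.mpr ht
    positivity
  refine ⟨(strictConcaveOn_mul_one_sub_exp_sub_div α hc).congr fun ℓ hℓ => ?_,
    fun ℓ hℓ hle => mul_nonpos_of_nonneg_of_nonpos hℓ.le ?_⟩
  · have : ℓ ≠ 0 := ne_of_gt hℓ
    dsimp only
    congr 3
    field_simp
    ring
  · have hgap : t - ℓ / μ - τ * ν ≤ 0 := by
      have : t - τ * ν ≤ ℓ / μ := by rw [le_div_iff₀ hμ]; linarith
      linarith
    have : 0 ≤ -(α * μ / ℓ) * (t - ℓ / μ - τ * ν) :=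
      mul_nonneg_of_nonpos_of_nonpos (neg_nonpos.mpr (by positivity)) hgap
    linarith [one_le_exp this]

/-- For fixed parameters `α, μ, τ > 0`, an integer `ν ≥ 2` and a real `t` with
`t ≠ τ * ν`, the function `ℓ ↦ f_ν(t; ℓ) = ℓ * (1 - exp (-(α*μ/ℓ) * (t - ℓ/μ - τ*ν)))` is
strictly concave on `(0, ∞)`; moreover, for every `ℓ > 0` with `ℓ ≥ μ * (t - τ*ν)`, one has
`f_ν(t; ℓ) ≤ 0`. -/
theorem strictConcaveOn_expected_return_piece
    (α μ τ : ℝ) (hα : 0 < α) (hμ : 0 < μ) (hτ : 0 < τ)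
    (ν : ℕ) (hν : 2 ≤ ν) (t : ℝ) (ht : t ≠ τ * ν) :
    StrictConcaveOn ℝ (Set.Ioi (0 : ℝ))
      (fun ℓ : ℝ => ℓ * (1 - Real.exp (-(α * μ / ℓ) * (t - ℓ / μ - τ * ν)))) ∧
    ∀ ℓ : ℝ, 0 < ℓ → μ * (t - τ * ν) ≤ ℓ →
      ℓ * (1 - Real.exp (-(α * μ / ℓ) * (t - ℓ / μ - τ * ν))) ≤ 0 :=
  strictConcaveOn_expected_return_piece_general α μ τ hα hμ ν t ht
end

section
/- Fix parameters α > 0, μ > 0, τ > 0 and a real t > 2τ. Let w be the unique positive solution of (1 + w)e^{−w} = e^{−α} and set s = αμ/w. Then ℓ* = s(t − 2τ) satisfies 0 < ℓ* < μ(t − 2τ), and ℓ* is the unique global maximizer over ℓ ∈ (0, ∞) of the function g(ℓ) = ℓ(1 − exp(−(αμ/ℓ)(t − ℓ/μ − 2τ))), with g(ℓ*) > 0. -/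
/-!
With `C = αμ(t - 2τ)` and `x = C / ℓ` the exponent is `α - x`, and the defining equation of `w`
reads `(1 + w) e^α = e^w`. Hence `1 - e^(α - x) = 1 - e^(w - x) / (1 + w)`, and the tangent-line
bound `e^y ≥ 1 + y` gives `1 - e^(α - x) ≤ x / (1 + w)` with equality exactly at `x = w`.
Multiplying by `ℓ = C / x` yields `g ℓ ≤ C / (1 + w)`, attained only at `ℓ = C / w = s (t - 2τ)`.
-/

open Real

namespace AWGN

variable {α w x : ℝ}

theorem one_add_mul_exp_eq_exp (h : (1 + w) * exp (-w) = exp (-α)) :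
    (1 + w) * exp α = exp w := by
  calc (1 + w) * exp α = (1 + w) * exp (-w) * exp w * exp α := by
        rw [mul_assoc _ (exp (-w)), ← exp_add, neg_add_cancel, exp_zero, mul_one]
    _ = exp w := by
        rw [h, mul_comm (exp (-α)), mul_assoc, ← exp_add, neg_add_cancel, exp_zero, mul_one]

theorem lt_of_one_add_mul_exp_eq_exp (hw : 0 < w) (hkey : (1 + w) * exp α = exp w) : α < w :=
  exp_lt_exp.mp (hkey ▸ lt_mul_of_one_lt_left (exp_pos α) (by linarith))

theorem exp_sub_eq_exp_sub_div (hw : 1 + w ≠ 0) (hkey : (1 + w) * exp α = exp w) (x : ℝ) :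
    exp (α - x) = exp (w - x) / (1 + w) := by
  rw [exp_sub, exp_sub, ← hkey]
  field_simp

theorem one_sub_exp_sub_lt_div (hw : 0 < 1 + w) (hkey : (1 + w) * exp α = exp w) (hx : x ≠ w) :
    1 - exp (α - x) < x / (1 + w) := by
  have htangent : w - x + 1 < exp (w - x) := add_one_lt_exp (sub_ne_zero.mpr hx.symm)
  rw [exp_sub_eq_exp_sub_div hw.ne' hkey, sub_lt_iff_lt_add, ← add_div, lt_div_iff₀ hw]
  linarith

theorem one_sub_exp_sub_self (hw : 1 + w ≠ 0) (hkey : (1 + w) * exp α = exp w) :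
    1 - exp (α - w) = w / (1 + w) := by
  rw [exp_sub_eq_exp_sub_div hw hkey, sub_self, exp_zero]
  field_simp
  ring

theorem neg_div_mul_sub_eq {μ T ℓ : ℝ} (hμ : μ ≠ 0) (hℓ : ℓ ≠ 0) (α : ℝ) :
    -(α * μ / ℓ) * (T - ℓ / μ) = α - α * μ * T / ℓ := by
  field_simp
  ring

end AWGN

open AWGN in
theorem awgn_unique_maximizer_general
    (α μ τ t : ℝ) (hα : 0 < α) (hμ : 0 < μ) (ht : 2 * τ < t)
    (w : ℝ) (hw : 0 < w) (hweq : (1 + w) * Real.exp (-w) = Real.exp (-α))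
    (s : ℝ) (hs : s = α * μ / w)
    (g : ℝ → ℝ)
    (hg : ∀ ℓ : ℝ, g ℓ = ℓ * (1 - Real.exp (-(α * μ / ℓ) * (t - ℓ / μ - 2 * τ)))) :
    0 < s * (t - 2 * τ) ∧ s * (t - 2 * τ) < μ * (t - 2 * τ) ∧
    (∀ ℓ : ℝ, 0 < ℓ → ℓ ≠ s * (t - 2 * τ) → g ℓ < g (s * (t - 2 * τ))) ∧
    0 < g (s * (t - 2 * τ)) := by
  have hT : 0 < t - 2 * τ := by linarith
  have h1w : 0 < 1 + w := by linarith
  have hkey := one_add_mul_exp_eq_exp hweq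
  have hsμ : s < μ := by
    rw [hs, div_lt_iff₀ hw]
    nlinarith [lt_of_one_add_mul_exp_eq_exp hw hkey]
  have hLμ : s * (t - 2 * τ) < μ * (t - 2 * τ) := mul_lt_mul_of_pos_right hsμ hT
  have hL : 0 < s * (t - 2 * τ) := by rw [hs]; positivity
  have hCL : α * μ * (t - 2 * τ) = w * (s * (t - 2 * τ)) := by rw [hs]; field_simp
  generalize s * (t - 2 * τ) = L at hL hLμ hCL ⊢
  have hg' : ∀ ℓ, 0 < ℓ → g ℓ = ℓ * (1 - exp (α - w * L / ℓ)) := fun ℓ hℓ => by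
    rw [hg, sub_sub, add_comm (ℓ / μ), ← sub_sub, neg_div_mul_sub_eq hμ.ne' hℓ.ne', hCL]
  have hgL : g L = w * L / (1 + w) := by
    rw [hg' L hL, mul_div_cancel_right₀ w hL.ne', one_sub_exp_sub_self h1w.ne' hkey]
    ring
  refine ⟨hL, hLμ, fun ℓ hℓ hne => ?_, hgL ▸ by positivity⟩
  have hxw : w * L / ℓ ≠ w := by
    rwa [Ne, div_eq_iff hℓ.ne', mul_right_inj' hw.ne', eq_comm]
  calc g ℓ = ℓ * (1 - exp (α - w * L / ℓ)) := hg' ℓ hℓ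
    _ < ℓ * (w * L / ℓ / (1 + w)) :=
        mul_lt_mul_of_pos_left (one_sub_exp_sub_lt_div h1w hkey hxw) hℓ
    _ = g L := by rw [hgL]; field_simp

/-- Fix `α, μ, τ > 0` and `t > 2τ`. Let `w` be the unique positive solution of
`(1 + w) * exp (-w) = exp (-α)` and set `s = α * μ / w`. Then `ℓ* = s * (t - 2τ)` satisfies
`0 < ℓ* < μ * (t - 2τ)`, and `ℓ*` is the unique global maximizer over `ℓ ∈ (0, ∞)` of the
function `g ℓ = ℓ * (1 - exp (-(α*μ/ℓ) * (t - ℓ/μ - 2τ)))`, with `g ℓ* > 0`. -/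
theorem awgn_unique_maximizer
    (α μ τ t : ℝ) (hα : 0 < α) (hμ : 0 < μ) (hτ : 0 < τ) (ht : 2 * τ < t)
    (w : ℝ) (hw : 0 < w) (hweq : (1 + w) * Real.exp (-w) = Real.exp (-α))
    (s : ℝ) (hs : s = α * μ / w)
    (g : ℝ → ℝ)
    (hg : ∀ ℓ : ℝ, g ℓ = ℓ * (1 - Real.exp (-(α * μ / ℓ) * (t - ℓ / μ - 2 * τ)))) :
    0 < s * (t - 2 * τ) ∧ s * (t - 2 * τ) < μ * (t - 2 * τ) ∧
    (∀ ℓ : ℝ, 0 < ℓ → ℓ ≠ s * (t - 2 * τ) → g ℓ < g (s * (t - 2 * τ))) ∧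
    0 < g (s * (t - 2 * τ)) :=
  awgn_unique_maximizer_general α μ τ t hα hμ ht w hw hweq s hs g hg
end

section
/- Fix parameters α > 0, μ > 0, τ > 0, a maximum load ℓ_max > 0, and a real t > 2τ. Let w be the unique positive solution of (1 + w)e^{−w} = e^{−α} and set s = αμ/w. Define G(ℓ) = max(0, ℓ(1 − exp(−(αμ/ℓ)(t − ℓ/μ − 2τ)))) for ℓ ∈ (0, ℓ_max] and G(0) = 0. Then the unique maximizer of G over [0, ℓ_max] is ℓ*(t) = min(s(t − 2τ), ℓ_max); in particular ℓ*(t) = s(t − 2τ) when 2τ < t ≤ ℓ_max/s + 2τ and ℓ*(t) = ℓ_max when t > ℓ_max/s + 2τ. -/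
/-!
Writing `c = αμ(t - 2τ)`, the return is `G ℓ = max 0 (F ℓ)` with `F x = x (1 - exp (α - c / x))`,
and `F' x = 1 - exp (α - u) (1 + u)` for `u = c / x`. Since `g u = (1 + u) e^{-u}` is strictly
decreasing on `[0, ∞)` and `g w = e^{-α}`, we get `F' x = 1 - g u / g w`, which is positive for
`x < c / w = s (t - 2τ)` and negative beyond. So `F` is unimodal with peak at `c / w`, where it is
positive because `c / x ≥ w > α`; the maximizer over `(0, ℓ_max]` is therefore `min (c / w) ℓ_max`.
-/

open Real Set

lemma strictAntiOn_one_add_mul_exp_neg :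
    StrictAntiOn (fun u : ℝ => (1 + u) * exp (-u)) (Ici 0) := by
  intro a ha b _ hab
  have hexp : b - a + 1 < exp (b - a) := add_one_lt_exp (by linarith)
  have hb : 1 + b < (1 + a) * exp (b - a) := by nlinarith [exp_pos (b - a), mem_Ici.mp ha]
  calc (1 + b) * exp (-b) < (1 + a) * exp (b - a) * exp (-b) :=
        mul_lt_mul_of_pos_right hb (exp_pos _)
    _ = (1 + a) * exp (-a) := by rw [mul_assoc, ← exp_add]; ring_nf

lemma lt_of_one_add_mul_exp_neg_eq {α w : ℝ} (hw : 0 < w)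
    (hweq : (1 + w) * exp (-w) = exp (-α)) : α < w := by
  have : exp (-w) < exp (-α) := by rw [← hweq]; nlinarith [exp_pos (-w)]
  linarith [exp_lt_exp.mp this]

lemma exp_sub_mul_one_add_eq_div {α w : ℝ} (hweq : (1 + w) * exp (-w) = exp (-α)) (u : ℝ) :
    exp (α - u) * (1 + u) = (1 + u) * exp (-u) / ((1 + w) * exp (-w)) := by
  rw [hweq, sub_eq_add_neg, exp_add, exp_neg α]
  field_simp

lemma exp_sub_mul_one_add_lt_one {α w u : ℝ} (hweq : (1 + w) * exp (-w) = exp (-α))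
    (hw : 0 ≤ w) (hwu : w < u) : exp (α - u) * (1 + u) < 1 := by
  rw [exp_sub_mul_one_add_eq_div hweq, div_lt_one (mul_pos (by linarith) (exp_pos _))]
  exact strictAntiOn_one_add_mul_exp_neg hw (hw.trans hwu.le) hwu

lemma one_lt_exp_sub_mul_one_add {α w u : ℝ} (hweq : (1 + w) * exp (-w) = exp (-α))
    (hu : 0 ≤ u) (huw : u < w) : 1 < exp (α - u) * (1 + u) := by
  rw [exp_sub_mul_one_add_eq_div hweq, one_lt_div (mul_pos (by linarith) (exp_pos _))]
  exact strictAntiOn_one_add_mul_exp_neg hu (hu.trans huw.le) huw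

noncomputable def awgnReturn (α c x : ℝ) : ℝ := x * (1 - exp (α - c / x))

lemma hasDerivAt_awgnReturn (α c : ℝ) {x : ℝ} (hx : x ≠ 0) :
    HasDerivAt (awgnReturn α c) (1 - exp (α - c / x) * (1 + c / x)) x := by
  have hexponent : HasDerivAt (fun y => α - c / y) (c / x ^ 2) x := by
    simpa [div_eq_mul_inv] using ((hasDerivAt_inv hx).const_mul c).const_sub α
  have h : HasDerivAt (fun y => y - y * exp (α - c / y))
      (1 - (1 * exp (α - c / x) + x * (exp (α - c / x) * (c / x ^ 2)))) x :=
    (hasDerivAt_id' x).sub ((hasDerivAt_id' x).mul hexponent.exp)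
  convert h using 1
  · funext y; simp only [awgnReturn]; ring
  · field_simp

lemma strictMonoOn_awgnReturn {α c w : ℝ} (hweq : (1 + w) * exp (-w) = exp (-α)) (hw : 0 < w) :
    StrictMonoOn (awgnReturn α c) (Ioc 0 (c / w)) := by
  refine strictMonoOn_of_deriv_pos (convex_Ioc 0 (c / w))
    (fun x hx => (hasDerivAt_awgnReturn α c hx.1.ne').continuousAt.continuousWithinAt) ?_
  intro x hx
  rw [interior_Ioc] at hx
  rw [(hasDerivAt_awgnReturn α c hx.1.ne').deriv, sub_pos]
  refine exp_sub_mul_one_add_lt_one hweq hw.le ?_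
  rw [lt_div_iff₀ hx.1, ← lt_div_iff₀' hw]
  exact hx.2

lemma strictAntiOn_awgnReturn {α c w : ℝ} (hweq : (1 + w) * exp (-w) = exp (-α))
    (hc : 0 < c) (hw : 0 < w) : StrictAntiOn (awgnReturn α c) (Ici (c / w)) := by
  have hpos : ∀ x ∈ Ici (c / w), 0 < x := fun x hx => (div_pos hc hw).trans_le hx
  refine strictAntiOn_of_deriv_neg (convex_Ici (c / w))
    (fun x hx => (hasDerivAt_awgnReturn α c (hpos x hx).ne').continuousAt.continuousWithinAt) ?_
  intro x hx
  rw [interior_Ici] at hx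
  have hx0 := hpos x (mem_Ici.mpr hx.le)
  rw [(hasDerivAt_awgnReturn α c hx0.ne').deriv, sub_neg]
  refine one_lt_exp_sub_mul_one_add hweq (div_pos hc hx0).le ?_
  rw [div_lt_iff₀ hx0, ← div_lt_iff₀' hw]
  exact hx

lemma mul_one_sub_exp_eq_awgnReturn (α μ τ t : ℝ) {ℓ : ℝ} (hμ : μ ≠ 0) (hℓ : ℓ ≠ 0) :
    ℓ * (1 - exp (-(α * μ / ℓ) * (t - ℓ / μ - 2 * τ))) = awgnReturn α (α * μ * (t - 2 * τ)) ℓ := by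
  rw [awgnReturn]
  congr 3
  field_simp
  ring

lemma awgnReturn_pos {α c x : ℝ} (hx : 0 < x) (hxc : α < c / x) : 0 < awgnReturn α c x :=
  mul_pos hx (sub_pos.mpr (exp_lt_one_iff.mpr (sub_neg.mpr hxc)))

lemma StrictMonoOn.lt_apply_min {f : ℝ → ℝ} {a p L x : ℝ} (hmono : StrictMonoOn f (Ioc a p))
    (hanti : StrictAntiOn f (Ici p)) (hap : a < p) (haL : a < L) (hx : x ∈ Ioc a L)
    (hne : x ≠ min p L) : f x < f (min p L) := by
  rcases le_or_gt x p with hxp | hpx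
  · exact hmono ⟨hx.1, hxp⟩ ⟨lt_min hap haL, min_le_left p L⟩
      ((le_min hxp hx.2).lt_of_ne hne)
  · rw [min_eq_left (hpx.le.trans hx.2)]
    exact hanti self_mem_Ici hpx.le hpx

theorem awgn_unique_maximizer_bounded_general
    (α μ τ t ℓmax : ℝ) (hα : 0 < α) (hμ : 0 < μ) (hℓmax : 0 < ℓmax)
    (ht : 2 * τ < t)
    (w : ℝ) (hw : 0 < w) (hweq : (1 + w) * Real.exp (-w) = Real.exp (-α))
    (s : ℝ) (hs : s = α * μ / w)
    (G : ℝ → ℝ)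
    (hG : ∀ ℓ : ℝ, 0 < ℓ → G ℓ = max 0 (ℓ * (1 - Real.exp (-(α * μ / ℓ) * (t - ℓ / μ - 2 * τ)))))
    (hG0 : G 0 = 0) :
    (min (s * (t - 2 * τ)) ℓmax ∈ Set.Icc (0 : ℝ) ℓmax) ∧
    (∀ ℓ : ℝ, ℓ ∈ Set.Icc (0 : ℝ) ℓmax → ℓ ≠ min (s * (t - 2 * τ)) ℓmax →
      G ℓ < G (min (s * (t - 2 * τ)) ℓmax)) ∧
    (t ≤ ℓmax / s + 2 * τ → min (s * (t - 2 * τ)) ℓmax = s * (t - 2 * τ)) ∧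
    (ℓmax / s + 2 * τ < t → min (s * (t - 2 * τ)) ℓmax = ℓmax) := by
  set c := α * μ * (t - 2 * τ)
  have hc : 0 < c := mul_pos (mul_pos hα hμ) (sub_pos.mpr ht)
  have hspos : 0 < s := hs ▸ div_pos (mul_pos hα hμ) hw
  have hpeak : s * (t - 2 * τ) = c / w := by rw [hs]; ring
  have hGF : ∀ x, 0 < x → G x = max 0 (awgnReturn α c x) := fun x hx => by
    rw [hG x hx, mul_one_sub_exp_eq_awgnReturn α μ τ t hμ.ne' hx.ne']
  set m := min (s * (t - 2 * τ)) ℓmax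
  have hm : 0 < m := lt_min (mul_pos hspos (sub_pos.mpr ht)) hℓmax
  have hFm : 0 < awgnReturn α c m := by
    refine awgnReturn_pos hm ((lt_of_one_add_mul_exp_neg_eq hw hweq).trans_le ?_)
    rw [le_div_iff₀ hm, ← le_div_iff₀' hw, ← hpeak]
    exact min_le_left _ _
  have hGm : G m = awgnReturn α c m := by rw [hGF m hm, max_eq_right hFm.le]
  refine ⟨⟨hm.le, min_le_right _ _⟩, fun ℓ hℓ hne => ?_,
    fun h => min_eq_left ?_, fun h => min_eq_right ?_⟩
  · rcases hℓ.1.eq_or_lt with rfl | hℓpos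
    · rwa [hG0, hGm]
    rw [hGF ℓ hℓpos, hGm]
    refine max_lt hFm ?_
    rw [show m = min (c / w) ℓmax by rw [← hpeak]] at hne ⊢
    exact (strictMonoOn_awgnReturn hweq hw).lt_apply_min (strictAntiOn_awgnReturn hweq hc hw)
      (div_pos hc hw) hℓmax ⟨hℓpos, hℓ.2⟩ hne
  · rw [← le_div_iff₀' hspos]; linarith
  · rw [← div_le_iff₀' hspos]; linarith

/-- Fix `α, μ, τ > 0`, a maximum load `ℓ_max > 0`, and `t > 2τ`. Let `w` be the
unique positive solution of `(1 + w) * exp (-w) = exp (-α)` and `s = α * μ / w`. With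
`G ℓ = max 0 (ℓ * (1 - exp (-(α*μ/ℓ) * (t - ℓ/μ - 2τ))))` for `ℓ ∈ (0, ℓ_max]` and `G 0 = 0`
(the given formula also evaluates to `0` at `ℓ = 0`), the unique maximizer of `G` over
`[0, ℓ_max]` is `ℓ*(t) = min (s * (t - 2τ)) ℓ_max`; in particular `ℓ*(t) = s * (t - 2τ)` when
`2τ < t ≤ ℓ_max / s + 2τ` and `ℓ*(t) = ℓ_max` when `t > ℓ_max / s + 2τ`. -/
theorem awgn_unique_maximizer_bounded
    (α μ τ t ℓmax : ℝ) (hα : 0 < α) (hμ : 0 < μ) (hτ : 0 < τ) (hℓmax : 0 < ℓmax)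
    (ht : 2 * τ < t)
    (w : ℝ) (hw : 0 < w) (hweq : (1 + w) * Real.exp (-w) = Real.exp (-α))
    (s : ℝ) (hs : s = α * μ / w)
    (G : ℝ → ℝ)
    (hG : ∀ ℓ : ℝ, 0 < ℓ → G ℓ = max 0 (ℓ * (1 - Real.exp (-(α * μ / ℓ) * (t - ℓ / μ - 2 * τ)))))
    (hG0 : G 0 = 0) :
    (min (s * (t - 2 * τ)) ℓmax ∈ Set.Icc (0 : ℝ) ℓmax) ∧
    (∀ ℓ : ℝ, ℓ ∈ Set.Icc (0 : ℝ) ℓmax → ℓ ≠ min (s * (t - 2 * τ)) ℓmax →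
      G ℓ < G (min (s * (t - 2 * τ)) ℓmax)) ∧
    (t ≤ ℓmax / s + 2 * τ → min (s * (t - 2 * τ)) ℓmax = s * (t - 2 * τ)) ∧
    (ℓmax / s + 2 * τ < t → min (s * (t - 2 * τ)) ℓmax = ℓmax) :=
  awgn_unique_maximizer_bounded_general α μ τ t ℓmax hα hμ hℓmax ht w hw hweq s hs G hG hG0
end

section
/- In the coded federated gradient setup, fix θ ∈ ℝ^{q×c} and let g(θ) = (1/m) Σ_{j=1}^{n} X_jᵀ(X_j θ − Y_j) denote the full gradient. Define the coded gradient g_C(θ) = Σ_{j=1}^{n} Σ_{k=1}^{ℓ_j} w_{j,k}² x_{j,k}ᵀ(x_{j,k} θ − y_{j,k}) and the uncoded aggregate g_U(θ) = Σ_{j=1}^{n} B_j Σ_{k ∈ S_j} x_{j,k}ᵀ(x_{j,k} θ − y_{j,k}), and set g_M(θ) = (1/m)(g_C(θ) + g_U(θ)). Then the entrywise expectation satisfies E[g_M(θ)] = g(θ). -/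
open MeasureTheory ProbabilityTheory Matrix Finset

/-! Unbiasedness is linearity of expectation alone: `E[B_j] = P_j`, so the uncoded aggregate
contributes `P_j` times the gradient of the sampled points of client `j` on average, and the
weights `1 - P_j` on exactly those points in the coded gradient make up the difference. -/

theorem Matrix.transpose_mul_eq_sum_vecMulVec {ι m n α : Type*} [Fintype ι]
    [NonUnitalNonAssocSemiring α] (A : Matrix ι m α) (B : Matrix ι n α) :
    Aᵀ * B = ∑ k, vecMulVec (A k) (B k) := by
  ext i j
  simp [mul_apply, vecMulVec_apply, Matrix.sum_apply]

theorem Finset.sum_ite_mem_one_sub_mul {ι R : Type*} [Fintype ι] [DecidableEq ι]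
    [CommRing R] (s : Finset ι) (p : R) (a : ι → R) :
    ∑ k, (if k ∈ s then 1 - p else 1) * a k = ∑ k, a k - p * ∑ k ∈ s, a k := by
  calc ∑ k, (if k ∈ s then 1 - p else 1) * a k
        = ∑ k, (a k - if k ∈ s then p * a k else 0) := by
        refine sum_congr rfl fun k _ => ?_
        split_ifs <;> ring
    _ = ∑ k, a k - p * ∑ k ∈ s, a k := by
        rw [sum_sub_distrib, sum_ite_mem, univ_inter, mul_sum]

theorem eq_indicator_one_of_zero_or_one {Ω : Type*} {f : Ω → ℝ}
    (h01 : ∀ ω, f ω = 0 ∨ f ω = 1) : f = {ω | f ω = 1}.indicator 1 := by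
  funext ω
  rcases h01 ω with h | h <;> simp [h]

section Expectation

variable {Ω : Type*} [MeasurableSpace Ω] {μ : Measure Ω}

theorem integrable_and_integral_eq_measureReal_of_zero_or_one [IsFiniteMeasure μ] {f : Ω → ℝ}
    (hf : Measurable f) (h01 : ∀ ω, f ω = 0 ∨ f ω = 1) :
    Integrable f μ ∧ ∫ ω, f ω ∂μ = μ.real {ω | f ω = 1} := by
  -- `set` freezes the level set, so that the `rw` below replaces `f` only outside it
  set s := {ω | f ω = 1}
  have hs : MeasurableSet s := hf (measurableSet_singleton 1)
  rw [eq_indicator_one_of_zero_or_one h01]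
  exact ⟨(integrable_const 1).indicator hs, integral_indicator_one hs⟩

theorem integral_const_add_sum_mul_const [IsProbabilityMeasure μ] {ι : Type*} (s : Finset ι)
    (a : ℝ) {f : ι → Ω → ℝ} (b : ι → ℝ) (hf : ∀ j ∈ s, Integrable (f j) μ) :
    ∫ ω, a + ∑ j ∈ s, f j ω * b j ∂μ =
      a + ∑ j ∈ s, (∫ ω, f j ω ∂μ) * b j := by
  have hf' j (hj : j ∈ s) : Integrable (fun ω => f j ω * b j) μ := (hf j hj).mul_const _
  rw [integral_add (integrable_const a) (integrable_finsetSum s hf'),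
    integral_finsetSum s hf']
  simp [integral_mul_const]

end Expectation

theorem coded_federated_gradient_unbiased_general
    {Ω : Type*} [MeasureSpace Ω] [IsProbabilityMeasure (ℙ : Measure Ω)]
    (n q c : ℕ) (ℓ : Fin n → ℕ)
    (X : ∀ j : Fin n, Matrix (Fin (ℓ j)) (Fin q) ℝ)
    (Y : ∀ j : Fin n, Matrix (Fin (ℓ j)) (Fin c) ℝ)
    (m : ℝ)
    (S : ∀ j : Fin n, Finset (Fin (ℓ j)))
    (P : Fin n → ℝ)
    (B : Fin n → Ω → ℝ)
    (hBmeas : ∀ j, Measurable (B j))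
    (hB01 : ∀ j ω, B j ω = 0 ∨ B j ω = 1)
    (hBP : ∀ j, (ℙ {ω | B j ω = 1}).toReal = P j)
    (wsq : ∀ j : Fin n, Fin (ℓ j) → ℝ)
    (hwsq : ∀ j k, wsq j k = if k ∈ S j then 1 - P j else 1)
    (θ : Matrix (Fin q) (Fin c) ℝ)
    (g gC : Matrix (Fin q) (Fin c) ℝ)
    (gU : Ω → Matrix (Fin q) (Fin c) ℝ)
    (gM : Ω → Matrix (Fin q) (Fin c) ℝ)
    (hg : g = (1 / m) • ∑ j, (X j)ᵀ * ((X j) * θ - Y j))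
    (hgC : gC = ∑ j, ∑ k, wsq j k •
      Matrix.vecMulVec (X j k) (Matrix.vecMul (X j k) θ - Y j k))
    (hgU : ∀ ω, gU ω = ∑ j, B j ω • ∑ k ∈ S j,
      Matrix.vecMulVec (X j k) (Matrix.vecMul (X j k) θ - Y j k))
    (hgM : ∀ ω, gM ω = (1 / m) • (gC + gU ω)) :
    ∀ (i : Fin q) (i' : Fin c), ∫ ω, gM ω i i' ∂ℙ = g i i' := by
  intro i i'
  set G : ∀ j, Fin (ℓ j) → ℝ := fun j k => vecMulVec (X j k) (X j k ᵥ* θ - Y j k) i i'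
  have hB j :=
    integrable_and_integral_eq_measureReal_of_zero_or_one (μ := ℙ) (hBmeas j) (hB01 j)
  have hBmean j : ∫ ω, B j ω = P j := (hB j).2.trans (hBP j)
  have hgM_apply ω : gM ω i i' = 1 / m * (gC i i' + ∑ j, B j ω * ∑ k ∈ S j, G j k) := by
    simp only [hgM, hgU, Matrix.smul_apply, Matrix.add_apply, Matrix.sum_apply, smul_eq_mul, G]
  calc ∫ ω, gM ω i i' = 1 / m * (gC i i' + ∑ j, P j * ∑ k ∈ S j, G j k) := by
        simp_rw [hgM_apply, integral_const_mul,
          integral_const_add_sum_mul_const _ _ _ fun j _ => (hB j).1, hBmean]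
    _ = 1 / m * ∑ j, ∑ k, G j k := by
        simp only [hgC, hwsq, Matrix.sum_apply, Matrix.smul_apply, smul_eq_mul, G,
          sum_ite_mem_one_sub_mul, ← sum_add_distrib, sub_add_cancel]
    _ = g i i' := by
        simp only [hg, transpose_mul_eq_sum_vecMulVec, Matrix.smul_apply, Matrix.sum_apply,
          smul_eq_mul, G]
        rfl

/-- Coded federated gradient setup: client `j` holds `X_j ∈ ℝ^{ℓ_j × q}` with
rows `x_{j,k}` and `Y_j ∈ ℝ^{ℓ_j × c}` with rows `y_{j,k}`; `m = Σ_j ℓ_j`;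
`g θ = (1/m) Σ_j X_jᵀ (X_j θ - Y_j)` is the full gradient. With sampled sets `S_j`, arrival
probabilities `P_j`, mutually independent `{0,1}`-valued `B_j` with `ℙ(B_j = 1) = P_j`, weights
`w_{j,k}² = 1 - P_j` for `k ∈ S_j` and `1` otherwise, the coded gradient
`g_C θ = Σ_j Σ_k w_{j,k}² x_{j,k}ᵀ (x_{j,k} θ - y_{j,k})`, the uncoded aggregate
`g_U θ = Σ_j B_j Σ_{k ∈ S_j} x_{j,k}ᵀ (x_{j,k} θ - y_{j,k})`, and
`g_M θ = (1/m) (g_C θ + g_U θ)`, the entrywise expectation satisfies `E[g_M θ] = g θ`. -/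
theorem coded_federated_gradient_unbiased
    {Ω : Type*} [MeasureSpace Ω] [IsProbabilityMeasure (ℙ : Measure Ω)]
    (n q c : ℕ) (ℓ : Fin n → ℕ)
    (X : ∀ j : Fin n, Matrix (Fin (ℓ j)) (Fin q) ℝ)
    (Y : ∀ j : Fin n, Matrix (Fin (ℓ j)) (Fin c) ℝ)
    (m : ℝ) (hm : m = ∑ j, (ℓ j : ℝ))
    (S : ∀ j : Fin n, Finset (Fin (ℓ j)))
    (P : Fin n → ℝ) (hP : ∀ j, P j ∈ Set.Icc (0 : ℝ) 1)
    (B : Fin n → Ω → ℝ)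
    (hBmeas : ∀ j, Measurable (B j))
    (hB01 : ∀ j ω, B j ω = 0 ∨ B j ω = 1)
    (hBP : ∀ j, (ℙ {ω | B j ω = 1}).toReal = P j)
    (hindep : iIndepFun B ℙ)
    (wsq : ∀ j : Fin n, Fin (ℓ j) → ℝ)
    (hwsq : ∀ j k, wsq j k = if k ∈ S j then 1 - P j else 1)
    (θ : Matrix (Fin q) (Fin c) ℝ)
    (g gC : Matrix (Fin q) (Fin c) ℝ)
    (gU : Ω → Matrix (Fin q) (Fin c) ℝ)
    (gM : Ω → Matrix (Fin q) (Fin c) ℝ)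
    (hg : g = (1 / m) • ∑ j, (X j)ᵀ * ((X j) * θ - Y j))
    (hgC : gC = ∑ j, ∑ k, wsq j k •
      Matrix.vecMulVec (X j k) (Matrix.vecMul (X j k) θ - Y j k))
    (hgU : ∀ ω, gU ω = ∑ j, B j ω • ∑ k ∈ S j,
      Matrix.vecMulVec (X j k) (Matrix.vecMul (X j k) θ - Y j k))
    (hgM : ∀ ω, gM ω = (1 / m) • (gC + gU ω)) :
    ∀ (i : Fin q) (i' : Fin c), ∫ ω, gM ω i i' ∂ℙ = g i i' :=
  coded_federated_gradient_unbiased_general n q c ℓ X Y m S P B hBmeas hB01 hBP wsq hwsq θ g gC gU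
    gM hg hgC hgU hgM
end
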